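/- Let n ≥ 2, let a₁, …, aₙ be pairwise distinct complex numbers, let I ⊆ ℂ[x₁, …, xₙ] be the ideal generated by ∑_{i=1}^{n} x_i² and all x_i x_j with i ≠ j, and let A = ℂ[x₁, …, xₙ]/I. Then: (1) there exists a unique ℂ-linear functional R : A → ℂ with R([1]) = 0, R([x_i]) = 0 for all i, and R([x_i²]) = 2/∏_{j≠i}(a_j − a_i) for all i = 1, …, n; (2) the symmetric bilinear form Q on A defined by Q(φ, ψ) = R(φ·ψ) has rank n + 2. -/

import Mathlib

/-!
In `A` the products `xᵢxⱼ` (`i ≠ j`) vanish, and so do the cubes, since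
`xᵢ³ = xᵢ·∑ₖ xₖ² - ∑_{k ≠ i} xₖ·xᵢxₖ`; hence `A` is spanned by `1`, `xᵢ`, `xᵢ²`, which gives
uniqueness. For existence, `p ↦ ∑ᵢ rᵢ·[xᵢ²]p` kills every multiple of the generators of `I`
because `∑ᵢ rᵢ = 0`, a Lagrange interpolation identity for `rᵢ = 2 / ∏_{j ≠ i}(aⱼ - aᵢ)`.

For the rank, `φ ↦ R(φ·)` maps every `xᵢ²` to a multiple of the image of `x_{i₀}²`, so its range
is spanned by the images of `xᵢ`, `1`, `x_{i₀}²`. These `n + 2` functionals are independent: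
evaluated at `xⱼ`, `x_{i₀}²`, `1` they form a diagonal matrix with entries `rⱼ`, `r_{i₀}`, `r_{i₀}`.
-/

open MvPolynomial

theorem Lagrange.sum_div_prod_sub_eq_zero {F ι : Type*} [Field F] [DecidableEq ι]
    {s : Finset ι} {v : ι → F} (hvs : Set.InjOn v s) (hs : 2 ≤ s.card) (c : F) :
    ∑ i ∈ s, c / ∏ j ∈ s.erase i, (v j - v i) = 0 := by
  have hvs' : Set.InjOn (-v) s := fun i hi j hj h => hvs hi hj (neg_injective h)
  -- the coefficient of degree `#s - 1 ≥ 1` of the constant `c`, interpolated at the nodes `-v i`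
  have key := coeff_eq_sum hvs' (P := Polynomial.C c)
    (Polynomial.degree_C_le.trans_lt (by exact_mod_cast (by omega : 0 < s.card)))
  rw [Polynomial.coeff_C, if_neg (by omega)] at key
  simpa [neg_add_eq_sub] using key.symm

theorem LinearIndependent.of_apply_ne_zero_of_apply_eq_zero {ι K M : Type*} [Field K]
    [AddCommGroup M] [Module K M] {f : ι → M →ₗ[K] K} (t : ι → M)
    (hself : ∀ i, f i (t i) ≠ 0) (hother : ∀ i j, i ≠ j → f i (t j) = 0) :
    LinearIndependent K f := by
  rw [linearIndependent_iff']
  intro s g hg i hi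
  have h := congrArg (fun φ : M →ₗ[K] K => φ (t i)) hg
  simp only [LinearMap.sum_apply, LinearMap.smul_apply, smul_eq_mul, LinearMap.zero_apply] at h
  rw [Finset.sum_eq_single_of_mem i hi fun j _ hji => by rw [hother j i hji, mul_zero]] at h
  exact (mul_eq_zero.mp h).resolve_right (hself i)

namespace MvPolynomial

variable {σ K : Type*} [CommSemiring K]

theorem coeff_single_two_mul_X_sq [DecidableEq σ] (q : MvPolynomial σ K) (i k : σ) :
    coeff (Finsupp.single i 2) (q * X k ^ 2) = if k = i then coeff 0 q else 0 := by
  rw [X_pow_eq_monomial, coeff_mul_monomial']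
  rcases eq_or_ne k i with rfl | hki
  · simp
  · rw [if_neg hki, if_neg]
    intro hle
    have := Finsupp.support_mono hle (by simp : k ∈ (Finsupp.single k 2).support)
    simp_all

theorem coeff_single_two_mul_X_mul_X (q : MvPolynomial σ K) (i : σ) {j k : σ} (hjk : j ≠ k) :
    coeff (Finsupp.single i 2) (q * (X j * X k)) = 0 := by
  rw [X, X, monomial_mul, coeff_mul_monomial', if_neg]
  intro hle
  have hj := Finsupp.support_mono hle
    (by simp [hjk] : j ∈ (Finsupp.single j 1 + Finsupp.single k 1).support)
  have hk := Finsupp.support_mono hle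
    (by simp [hjk.symm] : k ∈ (Finsupp.single j 1 + Finsupp.single k 1).support)
  simp_all

end MvPolynomial

noncomputable def sumSqIdeal (σ K : Type*) [Fintype σ] [CommRing K] : Ideal (MvPolynomial σ K) :=
  Ideal.span (insert (∑ i, X i ^ 2) {p | ∃ i j, i ≠ j ∧ p = X i * X j})

section

variable {σ K : Type*} [Fintype σ] [CommRing K]

noncomputable def weightedSqCoeff (r : σ → K) : MvPolynomial σ K →ₗ[K] K :=
  ∑ i, r i • lcoeff K (Finsupp.single i 2)

variable (r : σ → K)

theorem weightedSqCoeff_apply (p : MvPolynomial σ K) :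
    weightedSqCoeff r p = ∑ i, r i * coeff (Finsupp.single i 2) p := by
  simp [weightedSqCoeff]

theorem weightedSqCoeff_mul_X_sq (q : MvPolynomial σ K) (k : σ) :
    weightedSqCoeff r (q * X k ^ 2) = r k * coeff 0 q := by
  classical
  simp [weightedSqCoeff_apply, coeff_single_two_mul_X_sq]

theorem weightedSqCoeff_mul_X_mul_X (q : MvPolynomial σ K) {j k : σ} (hjk : j ≠ k) :
    weightedSqCoeff r (q * (X j * X k)) = 0 := by
  simp [weightedSqCoeff_apply, coeff_single_two_mul_X_mul_X _ _ hjk]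

theorem weightedSqCoeff_one : weightedSqCoeff r 1 = 0 := by
  classical
  simp [weightedSqCoeff_apply, coeff_one, eq_comm (a := (0 : σ →₀ ℕ))]

theorem weightedSqCoeff_X (i : σ) : weightedSqCoeff r (X i) = 0 := by
  classical
  simp [weightedSqCoeff_apply, coeff_X, Finsupp.single_eq_single_iff]

theorem weightedSqCoeff_X_sq (i : σ) : weightedSqCoeff r (X i ^ 2) = r i := by
  simpa using weightedSqCoeff_mul_X_sq r 1 i

theorem weightedSqCoeff_mul_eq_zero_of_mem (hr : ∑ i, r i = 0) {p : MvPolynomial σ K}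
    (hp : p ∈ sumSqIdeal σ K) (q : MvPolynomial σ K) : weightedSqCoeff r (q * p) = 0 := by
  induction hp using Submodule.span_induction generalizing q with
  | mem p hp =>
    obtain rfl | ⟨i, j, hij, rfl⟩ := hp
    · simp [Finset.mul_sum, weightedSqCoeff_mul_X_sq, ← Finset.sum_mul, hr]
    · exact weightedSqCoeff_mul_X_mul_X r q hij
  | zero => simp
  | add p p' _ _ hp hp' => rw [mul_add, map_add, hp, hp', add_zero]
  | smul c p _ hp => rw [smul_eq_mul, ← mul_assoc, hp]

end

namespace sumSqIdeal

variable {σ K : Type*} [Fintype σ] [CommRing K]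

local notation "𝔵" i => Ideal.Quotient.mk (sumSqIdeal σ K) (X i)

theorem sum_X_sq_mem : ∑ i, X i ^ 2 ∈ sumSqIdeal σ K :=
  Ideal.subset_span (Set.mem_insert _ _)

theorem X_mul_X_mem {i j : σ} (hij : i ≠ j) : X i * X j ∈ sumSqIdeal σ K :=
  Ideal.subset_span (Set.mem_insert_of_mem _ ⟨i, j, hij, rfl⟩)

theorem sum_mk_X_sq : ∑ i, (𝔵 i) ^ 2 = 0 := by
  simpa [map_sum] using Ideal.Quotient.eq_zero_iff_mem.mpr (sum_X_sq_mem (σ := σ) (K := K))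

theorem mk_X_mul_mk_X {i j : σ} (hij : i ≠ j) : (𝔵 i) * (𝔵 j) = 0 := by
  rw [← map_mul, Ideal.Quotient.eq_zero_iff_mem]
  exact X_mul_X_mem hij

theorem mk_X_sq_mul_mk_X (i j : σ) : (𝔵 i) ^ 2 * (𝔵 j) = 0 := by
  rcases eq_or_ne i j with rfl | hij
  · calc (𝔵 i) ^ 2 * (𝔵 i) = ∑ k, (𝔵 k) ^ 2 * (𝔵 i) := by
          rw [Fintype.sum_eq_single i fun k hki => by
            rw [sq, mul_assoc, mk_X_mul_mk_X hki, mul_zero]]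
      _ = 0 := by rw [← Finset.sum_mul, sum_mk_X_sq, zero_mul]
  · rw [sq, mul_assoc, mk_X_mul_mk_X hij, mul_zero]

theorem mk_X_mul_mk_X_sq (i j : σ) : (𝔵 i) * (𝔵 j) ^ 2 = 0 := by
  rw [mul_comm, mk_X_sq_mul_mk_X]

theorem mk_X_sq_mul_mk_X_sq (i j : σ) : (𝔵 i) ^ 2 * (𝔵 j) ^ 2 = 0 := by
  rw [sq (𝔵 j), ← mul_assoc, mk_X_sq_mul_mk_X, zero_mul]

theorem span_eq_top :
    Submodule.span K ({1} ∪ Set.range (fun i => 𝔵 i) ∪ Set.range (fun i => (𝔵 i) ^ 2)) = ⊤ := by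
  set S := Submodule.span K ({1} ∪ Set.range (fun i => 𝔵 i) ∪ Set.range (fun i => (𝔵 i) ^ 2))
  have one_mem : 1 ∈ S := Submodule.subset_span (by simp)
  have x_mem i : (𝔵 i) ∈ S := Submodule.subset_span (by simp)
  have x_sq_mem i : (𝔵 i) ^ 2 ∈ S := Submodule.subset_span (by simp)
  have mul_x_mem i : S ≤ S.comap (LinearMap.mulRight K (𝔵 i)) := by
    rw [Submodule.span_le]
    rintro _ ((rfl | ⟨j, rfl⟩) | ⟨j, rfl⟩)
    · simpa using x_mem i
    · rcases eq_or_ne j i with rfl | hji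
      · simpa [sq] using x_sq_mem j
      · simp [mk_X_mul_mk_X hji]
    · simp [mk_X_sq_mul_mk_X]
  rw [eq_top_iff]
  rintro φ -
  obtain ⟨p, rfl⟩ := Ideal.Quotient.mk_surjective φ
  induction p using MvPolynomial.induction_on with
  | C a =>
    rw [← algebraMap_eq, Ideal.Quotient.mk_algebraMap, Algebra.algebraMap_eq_smul_one]
    exact S.smul_mem a one_mem
  | add p q hp hq => rw [map_add]; exact add_mem hp hq
  | mul_X p i hp => rw [map_mul]; exact mul_x_mem i hp

theorem linearMap_ext {M : Type*} [AddCommGroup M] [Module K M]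
    {f g : (MvPolynomial σ K ⧸ sumSqIdeal σ K) →ₗ[K] M} (h1 : f 1 = g 1)
    (hX : ∀ i, f (𝔵 i) = g (𝔵 i)) (hX2 : ∀ i, f ((𝔵 i) ^ 2) = g ((𝔵 i) ^ 2)) : f = g := by
  refine LinearMap.ext_on span_eq_top ?_
  rintro _ ((rfl | ⟨i, rfl⟩) | ⟨i, rfl⟩)
  exacts [h1, hX i, hX2 i]

variable (r : σ → K)

def IsWeightFunctional (R : (MvPolynomial σ K ⧸ sumSqIdeal σ K) →ₗ[K] K) : Prop :=
  R 1 = 0 ∧ (∀ i, R (𝔵 i) = 0) ∧ ∀ i, R ((𝔵 i) ^ 2) = r i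

noncomputable def liftWeightedSqCoeff (hr : ∑ i, r i = 0) :
    (MvPolynomial σ K ⧸ sumSqIdeal σ K) →ₗ[K] K :=
  (Submodule.liftQ ((sumSqIdeal σ K).restrictScalars K) (weightedSqCoeff r)
      fun p hp => by simpa using weightedSqCoeff_mul_eq_zero_of_mem r hr hp 1).comp
    (Submodule.Quotient.restrictScalarsEquiv K (sumSqIdeal σ K)).symm.toLinearMap

theorem liftWeightedSqCoeff_mk (hr : ∑ i, r i = 0) (p : MvPolynomial σ K) :
    liftWeightedSqCoeff r hr (Ideal.Quotient.mk _ p) = weightedSqCoeff r p :=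
  rfl

theorem isWeightFunctional_liftWeightedSqCoeff (hr : ∑ i, r i = 0) :
    IsWeightFunctional r (liftWeightedSqCoeff r hr) := by
  refine ⟨?_, fun i => ?_, fun i => ?_⟩
  · rw [← map_one (Ideal.Quotient.mk _), liftWeightedSqCoeff_mk, weightedSqCoeff_one]
  · rw [liftWeightedSqCoeff_mk, weightedSqCoeff_X]
  · rw [← map_pow, liftWeightedSqCoeff_mk, weightedSqCoeff_X_sq]

variable {r} in
theorem IsWeightFunctional.unique {R R' : (MvPolynomial σ K ⧸ sumSqIdeal σ K) →ₗ[K] K}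
    (hR : IsWeightFunctional r R) (hR' : IsWeightFunctional r R') : R = R' :=
  linearMap_ext (hR.1.trans hR'.1.symm) (fun i => (hR.2.1 i).trans (hR'.2.1 i).symm)
    fun i => (hR.2.2 i).trans (hR'.2.2 i).symm

theorem existsUnique_isWeightFunctional (hr : ∑ i, r i = 0) :
    ∃! R, IsWeightFunctional r R :=
  ⟨_, isWeightFunctional_liftWeightedSqCoeff r hr,
    fun _ hR => hR.unique (isWeightFunctional_liftWeightedSqCoeff r hr)⟩

end sumSqIdeal

namespace sumSqIdeal.IsWeightFunctional

variable {σ K : Type*} [Fintype σ] [Field K] {r : σ → K}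
  {R : (MvPolynomial σ K ⧸ sumSqIdeal σ K) →ₗ[K] K}

local notation "𝔵" i => Ideal.Quotient.mk (sumSqIdeal σ K) (X i)
local notation "Φ" => LinearMap.compr₂ (LinearMap.mul K (MvPolynomial σ K ⧸ sumSqIdeal σ K)) R

theorem smul_mul_sq (hR : IsWeightFunctional r R) (i i₀ : σ) :
    r i₀ • Φ ((𝔵 i) ^ 2) = r i • Φ ((𝔵 i₀) ^ 2) := by
  obtain ⟨-, -, hsq⟩ := hR
  refine linearMap_ext ?_ (fun j => ?_) fun j => ?_
  · simp [hsq, mul_comm]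
  · simp [mk_X_sq_mul_mk_X]
  · simp [mk_X_sq_mul_mk_X_sq]

theorem range_mul_eq_span (hR : IsWeightFunctional r R) (hr : ∀ i, r i ≠ 0) (i₀ : σ) :
    LinearMap.range Φ =
      Submodule.span K (Set.range (Sum.elim (fun i => Φ (𝔵 i)) ![Φ 1, Φ ((𝔵 i₀) ^ 2)])) := by
  apply le_antisymm
  · rw [LinearMap.range_eq_map, ← span_eq_top, Submodule.map_span, Submodule.span_le]
    rintro _ ⟨_, ((rfl | ⟨i, rfl⟩) | ⟨i, rfl⟩), rfl⟩
    · exact Submodule.subset_span ⟨Sum.inr 0, rfl⟩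
    · exact Submodule.subset_span ⟨Sum.inl i, rfl⟩
    · rw [SetLike.mem_coe, ← Submodule.smul_mem_iff _ (hr i₀), hR.smul_mul_sq i i₀]
      exact Submodule.smul_mem _ _ (Submodule.subset_span ⟨Sum.inr 1, rfl⟩)
  · rw [Submodule.span_le]
    rintro _ ⟨i | k, rfl⟩
    · exact ⟨_, rfl⟩
    · fin_cases k <;> exact ⟨_, rfl⟩

theorem linearIndependent (hR : IsWeightFunctional r R) (hr : ∀ i, r i ≠ 0) (i₀ : σ) :
    LinearIndependent K (Sum.elim (fun i => Φ (𝔵 i)) ![Φ 1, Φ ((𝔵 i₀) ^ 2)]) := by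
  obtain ⟨h1, hX, hsq⟩ := hR
  refine .of_apply_ne_zero_of_apply_eq_zero (Sum.elim (fun i => 𝔵 i) ![(𝔵 i₀) ^ 2, 1]) ?_ ?_
  · rintro (i | k)
    · simp [← sq, hsq, hr]
    · fin_cases k <;> simp [hsq, hr]
  · rintro (i | k) (j | l) hne
    · simp [mk_X_mul_mk_X (Sum.inl_injective.ne_iff.mp hne)]
    · fin_cases l <;> simp [hX, mk_X_mul_mk_X_sq]
    · fin_cases k <;> simp [hX, mk_X_sq_mul_mk_X]
    · fin_cases k <;> fin_cases l <;> simp_all [mk_X_sq_mul_mk_X_sq]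

theorem finrank_range_mul [Nonempty σ] (hR : IsWeightFunctional r R) (hr : ∀ i, r i ≠ 0) :
    Module.finrank K (LinearMap.range Φ) = Fintype.card σ + 2 := by
  obtain ⟨i₀⟩ := ‹Nonempty σ›
  rw [hR.range_mul_eq_span hr i₀, finrank_span_eq_card (hR.linearIndependent hr i₀),
    Fintype.card_sum, Fintype.card_fin]

end sumSqIdeal.IsWeightFunctional

open sumSqIdeal in
/-- Let `n ≥ 2`, let `a₁, …, aₙ` be pairwise distinct complex numbers, let
`I ⊆ ℂ[x₁, …, xₙ]` be the ideal generated by `∑ xᵢ²` and all `xᵢxⱼ` with `i ≠ j`, and let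
`A = ℂ[x₁, …, xₙ]/I`. Then: (1) there is a unique `ℂ`-linear functional `R : A → ℂ` with
`R[1] = 0`, `R[xᵢ] = 0` and `R[xᵢ²] = 2/∏_{j≠i}(aⱼ − aᵢ)`; (2) the symmetric bilinear form
`Q(φ,ψ) = R(φ·ψ)` on `A` has rank `n + 2`. -/
theorem stmt_2 (n : ℕ) (hn : 2 ≤ n) (a : Fin n → ℂ) (ha : Function.Injective a)
    (I : Ideal (MvPolynomial (Fin n) ℂ))
    (hI : I = Ideal.span (insert (∑ i : Fin n, X i ^ 2)
      {p : MvPolynomial (Fin n) ℂ | ∃ i j : Fin n, i ≠ j ∧ p = X i * X j})) :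
    (∃! R : (MvPolynomial (Fin n) ℂ ⧸ I) →ₗ[ℂ] ℂ,
      R 1 = 0 ∧
      (∀ i : Fin n, R (Ideal.Quotient.mk I (X i)) = 0) ∧
      (∀ i : Fin n, R (Ideal.Quotient.mk I (X i ^ 2)) =
        2 / ∏ j ∈ Finset.univ.erase i, (a j - a i))) ∧
    (∀ R : (MvPolynomial (Fin n) ℂ ⧸ I) →ₗ[ℂ] ℂ,
      (R 1 = 0 ∧
       (∀ i : Fin n, R (Ideal.Quotient.mk I (X i)) = 0) ∧
       (∀ i : Fin n, R (Ideal.Quotient.mk I (X i ^ 2)) =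
         2 / ∏ j ∈ Finset.univ.erase i, (a j - a i))) →
      Module.finrank ℂ
        (LinearMap.range ((LinearMap.mul ℂ (MvPolynomial (Fin n) ℂ ⧸ I)).compr₂ R)) = n + 2) := by
  obtain rfl : I = sumSqIdeal (Fin n) ℂ := hI
  set r : Fin n → ℂ := fun i => 2 / ∏ j ∈ Finset.univ.erase i, (a j - a i)
  have hsum : ∑ i, r i = 0 :=
    Lagrange.sum_div_prod_sub_eq_zero ha.injOn (by simpa using hn) 2
  have hr : ∀ i, r i ≠ 0 := fun i => div_ne_zero two_ne_zero <|
    Finset.prod_ne_zero_iff.mpr fun j hj => sub_ne_zero_of_ne (ha.ne (Finset.ne_of_mem_erase hj))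
  have : Nonempty (Fin n) := ⟨⟨0, by omega⟩⟩
  simp only [map_pow]
  exact ⟨existsUnique_isWeightFunctional r hsum,
    fun R hR => by simpa using IsWeightFunctional.finrank_range_mul (r := r) hR hr⟩
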